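/- arXiv:1201.2577 — 3 statements merged into one kernel-verified Lean document; each statement's English description precedes it below -/
import Mathlib

section
/- Let S be a p×p symmetric matrix of rank r with support L (the span of its eigenvectors with nonzero eigenvalue), let P_L denote orthogonal projection onto L, and define 𝒫_L(A) = A − P_L^⊥ A P_L^⊥. Then for any p×p symmetric matrices Δ and M: |⟨Δ, 𝒫_L(M)⟩| ≤ √(2r) · ‖Δ‖_∞ · ‖M‖₂. -/
open Matrix

/-- Operator (spectral) norm of a real square matrix, via its action on Euclidean space. -/
noncomputable def opN {p : ℕ} (A : Matrix (Fin p) (Fin p) ℝ) : ℝ :=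
  ‖Matrix.toEuclideanCLM (𝕜 := ℝ) A‖

/-- Frobenius norm. -/
noncomputable def frobN {p : ℕ} (M : Matrix (Fin p) (Fin p) ℝ) : ℝ :=
  Real.sqrt ((Mᵀ * M).trace)

/-- Trace inner product. -/
def mInner {p : ℕ} (M N : Matrix (Fin p) (Fin p) ℝ) : ℝ := (Mᵀ * N).trace

/-- The matrix of the orthogonal projection onto a subspace of Euclidean space. -/
noncomputable def projMatrix {p : ℕ} (L : Submodule ℝ (EuclideanSpace ℝ (Fin p))) :
    Matrix (Fin p) (Fin p) ℝ :=
  Matrix.toEuclideanLin.symm (L.subtype ∘ₗ (Submodule.orthogonalProjection L).toLinearMap)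

/-- The support of a symmetric matrix: the range of the associated linear map. -/
noncomputable def suppOf {p : ℕ} (S : Matrix (Fin p) (Fin p) ℝ) :
    Submodule ℝ (EuclideanSpace ℝ (Fin p)) := LinearMap.range (Matrix.toEuclideanLin S)

/-!
Write `Q = 1 - P` for the projection `P` onto `L`. Moving the compression across the trace
pairing gives `⟨Δ, M - QMQ⟩ = ⟨Δ - QΔQ, M⟩`, and `Δ - QΔQ = PΔ + Q(ΔP)` splits into two
Frobenius-orthogonal pieces, each of Frobenius norm at most `‖Δ‖_∞ ‖P‖₂ = ‖Δ‖_∞ √r` because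
`‖P‖₂² = tr P = dim L = rank S`. Hence `‖Δ - QΔQ‖₂ ≤ √(2r) ‖Δ‖_∞`, and Cauchy–Schwarz concludes.
-/

section FrobeniusInner

variable {p : ℕ}

lemma mInner_eq_sum (X Y : Matrix (Fin p) (Fin p) ℝ) :
    mInner X Y = ∑ j, ∑ i, X i j * Y i j := by
  simp [mInner, trace, mul_apply]

lemma mInner_comm (X Y : Matrix (Fin p) (Fin p) ℝ) : mInner X Y = mInner Y X := by
  simp only [mInner_eq_sum, mul_comm]

lemma mInner_self_nonneg (X : Matrix (Fin p) (Fin p) ℝ) : 0 ≤ mInner X X := by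
  rw [mInner_eq_sum]
  exact Finset.sum_nonneg fun _ _ ↦ Finset.sum_nonneg fun _ _ ↦ mul_self_nonneg _

lemma mInner_transpose_self (X : Matrix (Fin p) (Fin p) ℝ) : mInner Xᵀ Xᵀ = mInner X X := by
  simp only [mInner_eq_sum, transpose_apply]
  exact Finset.sum_comm

lemma mInner_add_self_of_eq_zero {X Y : Matrix (Fin p) (Fin p) ℝ} (h : mInner X Y = 0) :
    mInner (X + Y) (X + Y) = mInner X X + mInner Y Y := by
  have h' : mInner Y X = 0 := by rw [mInner_comm, h]
  simp only [mInner, transpose_add, add_mul, mul_add, trace_add] at h h' ⊢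
  linarith

lemma frobN_eq_sqrt (X : Matrix (Fin p) (Fin p) ℝ) : frobN X = √(mInner X X) := rfl

lemma abs_mInner_le (X Y : Matrix (Fin p) (Fin p) ℝ) :
    |mInner X Y| ≤ frobN X * frobN Y := by
  have hcs := Finset.sum_mul_sq_le_sq_mul_sq Finset.univ
    (fun ij : Fin p × Fin p ↦ X ij.2 ij.1) (fun ij ↦ Y ij.2 ij.1)
  rw [frobN_eq_sqrt, frobN_eq_sqrt, ← Real.sqrt_mul (mInner_self_nonneg X)]
  apply Real.abs_le_sqrt
  simpa only [mInner_eq_sum, Fintype.sum_prod_type, sq] using hcs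

lemma mInner_self_eq_sum_norm_sq (X : Matrix (Fin p) (Fin p) ℝ) :
    mInner X X = ∑ j, ‖WithLp.toLp 2 (Xᵀ j)‖ ^ 2 := by
  rw [mInner_eq_sum]
  refine Finset.sum_congr rfl fun j _ ↦ ?_
  rw [EuclideanSpace.norm_sq_eq]
  simp [sq]

lemma mInner_mul_self_le (A X : Matrix (Fin p) (Fin p) ℝ) :
    mInner (A * X) (A * X) ≤ opN A ^ 2 * mInner X X := by
  simp only [mInner_self_eq_sum_norm_sq, Finset.mul_sum]
  refine Finset.sum_le_sum fun j _ ↦ ?_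
  have hcol :
      WithLp.toLp 2 ((A * X)ᵀ j) = toEuclideanCLM (𝕜 := ℝ) A (WithLp.toLp 2 (Xᵀ j)) := rfl
  rw [hcol, ← mul_pow]
  exact pow_le_pow_left₀ (norm_nonneg _) ((toEuclideanCLM (𝕜 := ℝ) A).le_opNorm _) 2

end FrobeniusInner

section StarProjection

variable {p : ℕ} {P : Matrix (Fin p) (Fin p) ℝ}

lemma IsStarProjection.transpose_eq (hP : IsStarProjection P) : Pᵀ = P := by
  simpa [star_eq_conjTranspose, conjTranspose_eq_transpose_of_trivial] using
    hP.isSelfAdjoint.star_eq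

lemma IsStarProjection.mInner_self (hP : IsStarProjection P) : mInner P P = P.trace := by
  rw [mInner, hP.transpose_eq, hP.isIdempotentElem.eq]

lemma IsStarProjection.mInner_mul_one_sub_mul (hP : IsStarProjection P)
    (A B : Matrix (Fin p) (Fin p) ℝ) :
    mInner (P * A) ((1 - P) * B) = 0 := by
  rw [mInner, transpose_mul, hP.transpose_eq, Matrix.mul_assoc, ← Matrix.mul_assoc P,
    hP.mul_one_sub_self, Matrix.zero_mul, Matrix.mul_zero, trace_zero]

lemma IsStarProjection.mInner_one_sub_mul_self_le (hP : IsStarProjection P)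
    (Z : Matrix (Fin p) (Fin p) ℝ) :
    mInner ((1 - P) * Z) ((1 - P) * Z) ≤ mInner Z Z := by
  have hZ : Z = P * Z + (1 - P) * Z := by noncomm_ring
  conv_rhs => rw [hZ, mInner_add_self_of_eq_zero (hP.mInner_mul_one_sub_mul Z Z)]
  linarith [mInner_self_nonneg (P * Z)]

lemma IsStarProjection.mInner_mul_self_le_trace (hP : IsStarProjection P)
    (Δ : Matrix (Fin p) (Fin p) ℝ) :
    mInner (Δ * P) (Δ * P) ≤ opN Δ ^ 2 * P.trace := by
  simpa only [hP.mInner_self] using mInner_mul_self_le Δ P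

lemma mInner_sub_conj_eq {Q : Matrix (Fin p) (Fin p) ℝ} (hQ : Qᵀ = Q)
    (Δ M : Matrix (Fin p) (Fin p) ℝ) :
    mInner Δ (M - Q * M * Q) = mInner (Δ - Q * Δ * Q) M := by
  have hconj : (Δᵀ * (Q * M * Q)).trace = ((Q * Δ * Q)ᵀ * M).trace := by
    simp only [transpose_mul, hQ, ← Matrix.mul_assoc]
    rw [trace_mul_comm, ← Matrix.mul_assoc, ← Matrix.mul_assoc]
  simp only [mInner, transpose_sub, mul_sub, sub_mul, trace_sub, hconj]

theorem IsStarProjection.abs_mInner_sub_conj_one_sub_le (hP : IsStarProjection P)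
    {Δ : Matrix (Fin p) (Fin p) ℝ} (hΔ : Δᵀ = Δ) (M : Matrix (Fin p) (Fin p) ℝ) :
    |mInner Δ (M - (1 - P) * M * (1 - P))| ≤ √(2 * P.trace) * opN Δ * frobN M := by
  have hsplit : Δ - (1 - P) * Δ * (1 - P) = P * Δ + (1 - P) * (Δ * P) := by noncomm_ring
  have hPΔ : mInner (P * Δ) (P * Δ) ≤ opN Δ ^ 2 * P.trace := by
    rw [← mInner_transpose_self, transpose_mul, hP.transpose_eq, hΔ]
    exact hP.mInner_mul_self_le_trace Δ
  have hQΔP : mInner ((1 - P) * (Δ * P)) ((1 - P) * (Δ * P)) ≤ opN Δ ^ 2 * P.trace :=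
    (hP.mInner_one_sub_mul_self_le _).trans (hP.mInner_mul_self_le_trace Δ)
  have hopN : 0 ≤ opN Δ := norm_nonneg _
  have hcompress : frobN (Δ - (1 - P) * Δ * (1 - P)) ≤ √(2 * P.trace) * opN Δ := by
    rw [frobN_eq_sqrt, hsplit, mInner_add_self_of_eq_zero (hP.mInner_mul_one_sub_mul _ _),
      ← Real.sqrt_sq hopN, ← Real.sqrt_mul' _ (sq_nonneg _)]
    exact Real.sqrt_le_sqrt (by linarith)
  calc |mInner Δ (M - (1 - P) * M * (1 - P))|
      = |mInner (Δ - (1 - P) * Δ * (1 - P)) M| := by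
        rw [mInner_sub_conj_eq hP.one_sub.transpose_eq]
    _ ≤ frobN (Δ - (1 - P) * Δ * (1 - P)) * frobN M := abs_mInner_le _ _
    _ ≤ √(2 * P.trace) * opN Δ * frobN M := by gcongr; exact Real.sqrt_nonneg _

end StarProjection

section Projection

variable {p : ℕ}

lemma trace_toEuclideanLin (A : Matrix (Fin p) (Fin p) ℝ) :
    LinearMap.trace ℝ _ (toEuclideanLin A) = A.trace := by
  rw [LinearMap.trace_eq_matrix_trace ℝ (EuclideanSpace.basisFun (Fin p) ℝ).toBasis,
    toEuclideanLin_eq_toLin_orthonormal, LinearMap.toMatrix_toLin]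

lemma projMatrix_eq_symm_toEuclideanCLM (L : Submodule ℝ (EuclideanSpace ℝ (Fin p))) :
    projMatrix L = (toEuclideanCLM (𝕜 := ℝ)).symm L.starProjection :=
  rfl

lemma isStarProjection_projMatrix (L : Submodule ℝ (EuclideanSpace ℝ (Fin p))) :
    IsStarProjection (projMatrix L) := by
  rw [projMatrix_eq_symm_toEuclideanCLM]
  exact isStarProjection_starProjection.map
    (toEuclideanCLM (𝕜 := ℝ) (n := Fin p)).symm.toStarAlgHom

lemma trace_projMatrix (L : Submodule ℝ (EuclideanSpace ℝ (Fin p))) :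
    (projMatrix L).trace = Module.finrank ℝ L := by
  have htoLin : toEuclideanLin (projMatrix L) = L.starProjection.toLinearMap :=
    toEuclideanLin.apply_symm_apply _
  have hproj := LinearMap.IsIdempotentElem.isProj_range _
    (ContinuousLinearMap.IsIdempotentElem.toLinearMap L.isIdempotentElem_starProjection)
  rw [← trace_toEuclideanLin, htoLin, hproj.trace]
  exact congrArg (fun V : Submodule ℝ (EuclideanSpace ℝ (Fin p)) ↦ (Module.finrank ℝ V : ℝ))
    L.range_starProjection

lemma finrank_suppOf (S : Matrix (Fin p) (Fin p) ℝ) : Module.finrank ℝ (suppOf S) = S.rank := by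
  rw [suppOf, toEuclideanLin_eq_toLin_orthonormal, ← rank_eq_finrank_range_toLin]

end Projection

theorem stmt8_general {p r : ℕ} (S : Matrix (Fin p) (Fin p) ℝ)
    (hrank : S.rank = r)
    (Δ M : Matrix (Fin p) (Fin p) ℝ) (hΔ : Δ.IsSymm) :
    let P := projMatrix (suppOf S)
    let Pperp := (1 : Matrix (Fin p) (Fin p) ℝ) - P
    |mInner Δ (M - Pperp * M * Pperp)| ≤ Real.sqrt (2 * r) * opN Δ * frobN M := by
  intro P Pperp
  have htrace : P.trace = r := by rw [trace_projMatrix, finrank_suppOf, hrank]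
  have key := (isStarProjection_projMatrix (suppOf S)).abs_mInner_sub_conj_one_sub_le hΔ.eq M
  rwa [htrace] at key

theorem stmt8 {p r : ℕ} (S : Matrix (Fin p) (Fin p) ℝ) (hS : S.IsSymm)
    (hrank : S.rank = r)
    (Δ M : Matrix (Fin p) (Fin p) ℝ) (hΔ : Δ.IsSymm) (hM : M.IsSymm) :
    let P := projMatrix (suppOf S)
    let Pperp := (1 : Matrix (Fin p) (Fin p) ℝ) - P
    |mInner Δ (M - Pperp * M * Pperp)| ≤ Real.sqrt (2 * r) * opN Δ * frobN M :=
  stmt8_general S hrank Δ M hΔ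
end

section
/- Let A be a p×p symmetric positive semidefinite matrix with spectral decomposition A = Σ_j σ_j u_j ⊗ u_j (σ_j ≥ 0, {u_j} orthonormal), and let λ > 0. Then the unique minimizer over the set 𝒮_p of p×p symmetric PSD matrices of F(S) = ‖A − S‖₂² + λ‖S‖₁ is Ŝ = Σ_j (σ_j − λ/2)₊ u_j ⊗ u_j, where x₊ = max(x,0) and ‖S‖₁ is the nuclear norm (= tr(S) for PSD S). -/
/-!
Write `A = Uᵀ diag(σ) U` with `U` orthogonal (its rows are the `u_j`) and rotate a competitor to
`T = U S Uᵀ`; the objective becomes `‖diag σ - T‖² + λ tr T` and only the diagonal entries `t_j = T_jj ≥ 0` interact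
with `σ`. Completing the square coordinatewise gives, with `c_j = (σ_j - λ/2)₊`,
`(σ_j - t_j)² + λ t_j = (σ_j - c_j)² + λ c_j + (t_j - c_j)² + 2 (λ/2 - σ_j)₊ t_j`,
so that `F(S) = F(Ŝ) + ‖S - Ŝ‖² + 2 ∑_j (λ/2 - σ_j)₊ T_jj`. Both correction terms are nonnegative
for PSD `S`, and the first vanishes only at `S = Ŝ`.
-/

open Matrix

/-- Squared Frobenius norm. -/
def frobSq {p : ℕ} (M : Matrix (Fin p) (Fin p) ℝ) : ℝ := (Mᵀ * M).trace

/-- Nuclear norm (sum of singular values) of a real square matrix: trace of √(AᵀA). -/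
noncomputable def nucN {p : ℕ} (A : Matrix (Fin p) (Fin p) ℝ) : ℝ :=
  ((Matrix.posSemidef_conjTranspose_mul_self A).1.eigenvectorUnitary.1 *
    diagonal ((RCLike.ofReal : ℝ → ℝ) ∘ (√·) ∘ (Matrix.posSemidef_conjTranspose_mul_self A).1.eigenvalues) *
    (star (Matrix.posSemidef_conjTranspose_mul_self A).1.eigenvectorUnitary :
      Matrix (Fin p) (Fin p) ℝ)).trace

section

variable {p : ℕ}

lemma frobSq_eq_trace_conjTranspose_mul_self (M : Matrix (Fin p) (Fin p) ℝ) :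
    frobSq M = (Mᴴ * M).trace := by
  rw [conjTranspose_eq_transpose_of_trivial, frobSq]

lemma frobSq_nonneg (M : Matrix (Fin p) (Fin p) ℝ) : 0 ≤ frobSq M := by
  rw [frobSq_eq_trace_conjTranspose_mul_self]
  exact (posSemidef_conjTranspose_mul_self M).trace_nonneg

lemma frobSq_eq_zero_iff {M : Matrix (Fin p) (Fin p) ℝ} : frobSq M = 0 ↔ M = 0 := by
  rw [frobSq_eq_trace_conjTranspose_mul_self, trace_conjTranspose_mul_self_eq_zero_iff]

lemma frobSq_sub (X Y : Matrix (Fin p) (Fin p) ℝ) :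
    frobSq (X - Y) = frobSq X - 2 * (Xᵀ * Y).trace + frobSq Y := by
  have hYX : (Yᵀ * X).trace = (Xᵀ * Y).trace := by
    rw [← trace_transpose, transpose_mul, transpose_transpose]
  simp only [frobSq, transpose_sub, sub_mul, mul_sub, trace_sub, hYX]
  ring

lemma frobSq_diagonal (a : Fin p → ℝ) : frobSq (diagonal a) = ∑ i, a i ^ 2 := by
  simp [frobSq, sq]

lemma trace_transpose_diagonal_mul (a : Fin p → ℝ) (M : Matrix (Fin p) (Fin p) ℝ) :
    ((diagonal a)ᵀ * M).trace = ∑ i, a i * M i i := by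
  simp [trace]

lemma frobSq_transpose_mul_mul {U : Matrix (Fin p) (Fin p) ℝ} (hU : U * Uᵀ = 1)
    (M : Matrix (Fin p) (Fin p) ℝ) : frobSq (Uᵀ * M * U) = frobSq M := by
  simp only [frobSq, transpose_mul, transpose_transpose, Matrix.mul_assoc]
  rw [← Matrix.mul_assoc U Uᵀ, hU, Matrix.one_mul, trace_mul_comm, Matrix.mul_assoc,
    Matrix.mul_assoc, hU, Matrix.mul_one]

lemma trace_transpose_mul_mul {U : Matrix (Fin p) (Fin p) ℝ} (hU : U * Uᵀ = 1)
    (M : Matrix (Fin p) (Fin p) ℝ) : (Uᵀ * M * U).trace = M.trace := by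
  rw [trace_mul_comm, ← Matrix.mul_assoc, hU, Matrix.one_mul]

/-- For PSD `S`, `√(SᵀS) = √(S²) = S`. -/
lemma nucN_eq_trace {S : Matrix (Fin p) (Fin p) ℝ} (hS : S.PosSemidef) : nucN S = S.trace := by
  open scoped MatrixOrder in
  have hcfc : nucN S = (cfc Real.sqrt (Sᴴ * S)).trace := by
    rw [(posSemidef_conjTranspose_mul_self S).1.cfc_eq]; rfl
  have hsq : (S * S).PosSemidef := by
    simpa only [hS.1.eq] using posSemidef_conjTranspose_mul_self S
  open scoped MatrixOrder in
  rw [hcfc, hS.1.eq, ← cfcₙ_eq_cfc (f := Real.sqrt) (a := S * S),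
    ← CFC.sqrt_eq_real_sqrt _ hsq.nonneg, CFC.sqrt_mul_self S hS.nonneg]

lemma posSemidef_transpose_mul_diagonal_mul {m n : Type*} [Fintype m] [Fintype n] [DecidableEq m]
    {a : m → ℝ} (ha : ∀ i, 0 ≤ a i) (U : Matrix m n ℝ) : (Uᵀ * diagonal a * U).PosSemidef := by
  simpa [conjTranspose_eq_transpose_of_trivial] using
    (posSemidef_diagonal_iff.mpr ha).conjTranspose_mul_mul_same U

lemma sum_smul_vecMulVec_eq_transpose_mul_diagonal_mul {m n R : Type*} [Fintype m]
    [DecidableEq m] [CommSemiring R] (u : m → n → R) (a : m → R) :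
    ∑ j, a j • vecMulVec (u j) (u j) = (of u)ᵀ * diagonal a * of u := by
  ext i l
  rw [mul_apply]
  simp only [Matrix.sum_apply, Matrix.smul_apply, vecMulVec_apply, smul_eq_mul, mul_diagonal,
    transpose_apply, of_apply]
  exact Finset.sum_congr rfl fun j _ ↦ by ring

lemma of_mul_transpose_eq_one {u : Fin p → Fin p → ℝ}
    (hu : ∀ i j, ∑ k, u i k * u j k = if i = j then (1 : ℝ) else 0) : of u * (of u)ᵀ = 1 := by
  ext i j
  simpa [mul_apply, one_apply] using hu i j

def softThreshold (τ x : ℝ) : ℝ := max (x - τ) 0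

lemma sq_sub_add_mul_eq_softThreshold (σ lam t : ℝ) :
    let c := softThreshold (lam / 2) σ
    (σ - t) ^ 2 + lam * t = (σ - c) ^ 2 + lam * c + (t - c) ^ 2 + 2 * (max (lam / 2 - σ) 0 * t) := by
  rcases le_total σ (lam / 2) with h | h
  · rw [softThreshold, max_eq_right (by linarith), max_eq_left (by linarith)]; ring
  · rw [softThreshold, max_eq_left (by linarith), max_eq_right (by linarith)]; ring

lemma frobSq_diagonal_sub_add_trace (σ : Fin p → ℝ) (lam : ℝ) (T : Matrix (Fin p) (Fin p) ℝ) :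
    let C := diagonal fun i ↦ softThreshold (lam / 2) (σ i)
    frobSq (diagonal σ - T) + lam * T.trace
      = frobSq (diagonal σ - C) + lam * C.trace + frobSq (C - T)
        + 2 * ∑ i, max (lam / 2 - σ i) 0 * T i i := by
  dsimp only
  set c : Fin p → ℝ := fun i ↦ softThreshold (lam / 2) (σ i)
  have hsum : ∑ i, (σ i ^ 2 - 2 * (σ i * T i i) + lam * T i i)
      = ∑ i, ((σ i - c i) ^ 2 + lam * c i + (c i ^ 2 - 2 * (c i * T i i))
          + 2 * (max (lam / 2 - σ i) 0 * T i i)) :=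
    Finset.sum_congr rfl fun i _ ↦ by
      linear_combination sq_sub_add_mul_eq_softThreshold (σ i) lam (T i i)
  simp only [Finset.sum_add_distrib, Finset.sum_sub_distrib, ← Finset.mul_sum] at hsum
  rw [frobSq_sub, frobSq_sub (diagonal c), diagonal_sub, frobSq_diagonal, frobSq_diagonal,
    frobSq_diagonal, trace_transpose_diagonal_mul, trace_transpose_diagonal_mul, trace_diagonal,
    trace]
  simp only [diag]
  linarith

lemma frobSq_sub_add_trace_eq {U : Matrix (Fin p) (Fin p) ℝ} (hU : U * Uᵀ = 1)
    (σ : Fin p → ℝ) (lam : ℝ) (S : Matrix (Fin p) (Fin p) ℝ) :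
    let A := Uᵀ * diagonal σ * U
    let Shat := Uᵀ * diagonal (fun i ↦ softThreshold (lam / 2) (σ i)) * U
    frobSq (A - S) + lam * S.trace
      = frobSq (A - Shat) + lam * Shat.trace + frobSq (Shat - S)
        + 2 * ∑ i, max (lam / 2 - σ i) 0 * (U * S * Uᵀ) i i := by
  have hUU : Uᵀ * U = 1 := mul_eq_one_comm.mp hU
  set T := U * S * Uᵀ
  have hS : S = Uᵀ * T * U := by
    simp only [T, ← Matrix.mul_assoc, hUU, Matrix.one_mul]
    rw [Matrix.mul_assoc, hUU, Matrix.mul_one]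
  rw [hS]
  simp only [← sub_mul, ← mul_sub, frobSq_transpose_mul_mul hU, trace_transpose_mul_mul hU]
  exact frobSq_diagonal_sub_add_trace σ lam T

lemma frobSq_sub_add_nucN_add_frobSq_le {U : Matrix (Fin p) (Fin p) ℝ} (hU : U * Uᵀ = 1)
    (σ : Fin p → ℝ) (lam : ℝ) {S : Matrix (Fin p) (Fin p) ℝ} (hS : S.PosSemidef) :
    let A := Uᵀ * diagonal σ * U
    let Shat := Uᵀ * diagonal (fun i ↦ softThreshold (lam / 2) (σ i)) * U
    frobSq (A - Shat) + lam * nucN Shat + frobSq (Shat - S) ≤ frobSq (A - S) + lam * nucN S := by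
  intro A Shat
  have hShat : Shat.PosSemidef :=
    posSemidef_transpose_mul_diagonal_mul (fun _ ↦ le_max_right _ _) U
  have hdiag (i : Fin p) : 0 ≤ (U * S * Uᵀ) i i := by
    simpa [conjTranspose_eq_transpose_of_trivial] using
      (hS.mul_mul_conjTranspose_same U).diag_nonneg (i := i)
  have hsum : 0 ≤ ∑ i, max (lam / 2 - σ i) 0 * (U * S * Uᵀ) i i :=
    Finset.sum_nonneg fun i _ ↦ mul_nonneg (le_max_right _ _) (hdiag i)
  rw [nucN_eq_trace hS, nucN_eq_trace hShat, frobSq_sub_add_trace_eq hU σ lam S]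
  linarith

end

theorem stmt13_general {p : ℕ} (A : Matrix (Fin p) (Fin p) ℝ)
    (σ : Fin p → ℝ)
    (u : Fin p → Fin p → ℝ)
    (hu : ∀ i j, ∑ k, u i k * u j k = if i = j then (1 : ℝ) else 0)
    (hA : A = ∑ j, σ j • Matrix.vecMulVec (u j) (u j))
    (lam : ℝ) :
    let Shat : Matrix (Fin p) (Fin p) ℝ :=
      ∑ j, max (σ j - lam / 2) 0 • Matrix.vecMulVec (u j) (u j)
    Shat.PosSemidef ∧
    (∀ S : Matrix (Fin p) (Fin p) ℝ, S.PosSemidef →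
      frobSq (A - Shat) + lam * nucN Shat ≤ frobSq (A - S) + lam * nucN S) ∧
    (∀ S : Matrix (Fin p) (Fin p) ℝ, S.PosSemidef →
      frobSq (A - S) + lam * nucN S = frobSq (A - Shat) + lam * nucN Shat → S = Shat) := by
  intro Shat
  have hU := of_mul_transpose_eq_one hu
  have hShat : Shat = (of u)ᵀ * diagonal (fun j ↦ softThreshold (lam / 2) (σ j)) * of u :=
    sum_smul_vecMulVec_eq_transpose_mul_diagonal_mul u _
  have hShat_psd : Shat.PosSemidef :=
    hShat ▸ posSemidef_transpose_mul_diagonal_mul (fun _ ↦ le_max_right _ _) _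
  rw [sum_smul_vecMulVec_eq_transpose_mul_diagonal_mul] at hA
  have hgap (S : Matrix (Fin p) (Fin p) ℝ) (hS : S.PosSemidef) :
      frobSq (A - Shat) + lam * nucN Shat + frobSq (Shat - S)
        ≤ frobSq (A - S) + lam * nucN S := by
    rw [hA, hShat]
    exact frobSq_sub_add_nucN_add_frobSq_le hU σ lam hS
  refine ⟨hShat_psd, fun S hS ↦ ?_, fun S hS heq ↦ ?_⟩
  · linarith [hgap S hS, frobSq_nonneg (Shat - S)]
  · have hzero : frobSq (Shat - S) = 0 := le_antisymm (by linarith [hgap S hS]) (frobSq_nonneg _)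
    exact (sub_eq_zero.mp (frobSq_eq_zero_iff.mp hzero)).symm

theorem stmt13 {p : ℕ} (A : Matrix (Fin p) (Fin p) ℝ)
    (σ : Fin p → ℝ) (hσ : ∀ j, 0 ≤ σ j)
    (u : Fin p → Fin p → ℝ)
    (hu : ∀ i j, ∑ k, u i k * u j k = if i = j then (1 : ℝ) else 0)
    (hA : A = ∑ j, σ j • Matrix.vecMulVec (u j) (u j))
    (lam : ℝ) (hlam : 0 < lam) :
    let Shat : Matrix (Fin p) (Fin p) ℝ :=
      ∑ j, max (σ j - lam / 2) 0 • Matrix.vecMulVec (u j) (u j)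
    Shat.PosSemidef ∧
    (∀ S : Matrix (Fin p) (Fin p) ℝ, S.PosSemidef →
      frobSq (A - Shat) + lam * nucN Shat ≤ frobSq (A - S) + lam * nucN S) ∧
    (∀ S : Matrix (Fin p) (Fin p) ℝ, S.PosSemidef →
      frobSq (A - S) + lam * nucN S = frobSq (A - Shat) + lam * nucN Shat → S = Shat) :=
  stmt13_general A σ u hu hA lam
end

section
/- Let Σ̃ and Σ be p×p symmetric PSD matrices and λ > 0 with λ ≥ 2‖Σ̃ − Σ‖_∞. Let Σ̂ = argmin_{S ∈ 𝒮_p} ‖Σ̃ − S‖₂² + λ‖S‖₁. Then for every S ∈ 𝒮_p, ‖Σ̂ − Σ‖₂² ≤ ‖S − Σ‖₂² + 2λ‖S‖₁. -/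
open Matrix

/-!
Write `A = Σ̃ - Σ`. Expanding the squares, the difference
`‖Σ̂ - Σ‖₂² - ‖S - Σ‖₂²` equals `‖Σ̃ - Σ̂‖₂² - ‖Σ̃ - S‖₂² + 2 tr(A Σ̂) - 2 tr(A S)`.
Minimality of `Σ̂` bounds the first two terms by `λ (tr S - tr Σ̂)`, since the nuclear norm
of a PSD matrix is its trace, and trace duality `|tr(A B)| ≤ ‖A‖_∞ tr B` for PSD `B`,
together with `2 ‖A‖_∞ ≤ λ`, bounds the two trace terms by `λ tr Σ̂ + λ tr S`.
-/

open scoped MatrixOrder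

variable {p : ℕ}

lemma nucN_eq_trace_s15 {A : Matrix (Fin p) (Fin p) ℝ} (hA : A.PosSemidef) : nucN A = A.trace := by
  have hAA := posSemidef_conjTranspose_mul_self A
  have hsqrt : nucN A = (CFC.sqrt (Aᴴ * A)).trace := by
    rw [CFC.sqrt_eq_real_sqrt _ hAA.nonneg, cfcₙ_eq_cfc, hAA.isHermitian.cfc_eq]
    rfl
  rw [hsqrt, hA.isHermitian.eq, CFC.sqrt_mul_self A hA.nonneg]

lemma frobSq_sub_sub_frobSq_sub (T M : Matrix (Fin p) (Fin p) ℝ)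
    {X Y : Matrix (Fin p) (Fin p) ℝ} (hX : X.IsSymm) (hY : Y.IsSymm) :
    frobSq (X - M) - frobSq (Y - M) =
      frobSq (T - X) - frobSq (T - Y) + 2 * ((T - M) * X).trace - 2 * ((T - M) * Y).trace := by
  have hexpand {Z : Matrix (Fin p) (Fin p) ℝ} (hZ : Zᵀ = Z) :
      frobSq (Z - M) = frobSq (T - Z) + 2 * ((T - M) * Z).trace
        + (frobSq (T - M) - 2 * (Tᵀ * (T - M)).trace) := by
    have hMZ : (Mᵀ * Z).trace = (M * Z).trace := by
      conv_lhs => rw [← hZ]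
      exact trace_transpose_mul _ _
    have hTZ : (Tᵀ * Z).trace = (T * Z).trace := by
      conv_lhs => rw [← hZ]
      exact trace_transpose_mul _ _
    have hMT : (Mᵀ * T).trace = (Tᵀ * M).trace := by
      rw [← trace_transpose, transpose_mul, transpose_transpose]
    simp only [frobSq, transpose_sub, hZ, sub_mul, mul_sub, trace_sub, hMZ, hTZ, hMT,
      trace_mul_comm Z M, trace_mul_comm Z T]
    ring
  rw [hexpand hX.eq, hexpand hY.eq]
  ring

lemma abs_dotProduct_mulVec_le_opN (A : Matrix (Fin p) (Fin p) ℝ) (x : Fin p → ℝ) :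
    |x ⬝ᵥ A *ᵥ x| ≤ opN A * (x ⬝ᵥ x) := by
  set y := WithLp.toLp 2 x
  have hquad : x ⬝ᵥ A *ᵥ x = inner ℝ y (toEuclideanCLM (𝕜 := ℝ) A y) := by
    simp [y, EuclideanSpace.inner_toLp_toLp, dotProduct_comm]
  have hnorm : x ⬝ᵥ x = ‖y‖ * ‖y‖ := by
    rw [← real_inner_self_eq_norm_mul_norm, EuclideanSpace.inner_toLp_toLp]
    simp
  calc |x ⬝ᵥ A *ᵥ x| ≤ ‖y‖ * ‖toEuclideanCLM (𝕜 := ℝ) A y‖ := hquad ▸ abs_real_inner_le_norm _ _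
    _ ≤ ‖y‖ * (opN A * ‖y‖) := by gcongr; exact (toEuclideanCLM (𝕜 := ℝ) A).le_opNorm y
    _ = opN A * (x ⬝ᵥ x) := by rw [hnorm]; ring

lemma abs_trace_mul_le_opN_mul_trace (A : Matrix (Fin p) (Fin p) ℝ)
    {B : Matrix (Fin p) (Fin p) ℝ} (hB : B.PosSemidef) :
    |(A * B).trace| ≤ opN A * B.trace := by
  obtain ⟨D, rfl⟩ := CStarAlgebra.nonneg_iff_eq_mul_star_self.mp hB.nonneg
  have hcol (M : Matrix (Fin p) (Fin p) ℝ) :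
      (Dᵀ * M * D).trace = ∑ i, Dᵀ i ⬝ᵥ M *ᵥ Dᵀ i := by
    simp only [trace, diag_apply, mul_mul_apply]
  have htrace : (A * (D * star D)).trace = (Dᵀ * A * D).trace := by
    rw [star_eq_conjTranspose, conjTranspose_eq_transpose_of_trivial, ← Matrix.mul_assoc,
      trace_mul_comm, Matrix.mul_assoc]
  have htraceB : (D * star D).trace = (Dᵀ * 1 * D).trace := by
    rw [star_eq_conjTranspose, conjTranspose_eq_transpose_of_trivial, Matrix.mul_one, trace_mul_comm]
  rw [htrace, htraceB, hcol, hcol, Finset.mul_sum]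
  refine (Finset.abs_sum_le_sum_abs _ _).trans (Finset.sum_le_sum fun i _ => ?_)
  simpa using abs_dotProduct_mulVec_le_opN A (Dᵀ i)

theorem stmt15_general {p : ℕ} (SigTilde Sig Sighat : Matrix (Fin p) (Fin p) ℝ)
    (lam : ℝ) (hlam : 2 * opN (SigTilde - Sig) ≤ lam)
    (hhat : Sighat.PosSemidef)
    (hmin : ∀ S : Matrix (Fin p) (Fin p) ℝ, S.PosSemidef →
      frobSq (SigTilde - Sighat) + lam * nucN Sighat ≤ frobSq (SigTilde - S) + lam * nucN S) :
    ∀ S : Matrix (Fin p) (Fin p) ℝ, S.PosSemidef →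
      frobSq (Sighat - Sig) ≤ frobSq (S - Sig) + 2 * lam * nucN S := by
  intro S hS
  have hminS := hmin S hS
  rw [nucN_eq_trace_s15 hhat, nucN_eq_trace_s15 hS] at hminS
  rw [nucN_eq_trace_s15 hS]
  have hexpand := frobSq_sub_sub_frobSq_sub SigTilde Sig
    (isHermitian_iff_isSymm.mp hhat.isHermitian) (isHermitian_iff_isSymm.mp hS.isHermitian)
  have hdual {B : Matrix (Fin p) (Fin p) ℝ} (hB : B.PosSemidef) :
      |((SigTilde - Sig) * B).trace| ≤ lam / 2 * B.trace :=
    (abs_trace_mul_le_opN_mul_trace _ hB).trans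
      (mul_le_mul_of_nonneg_right (by linarith) hB.trace_nonneg)
  have hdual_hat := abs_le.mp (hdual hhat)
  have hdual_S := abs_le.mp (hdual hS)
  linarith [hdual_hat.2, hdual_S.1]

theorem stmt15 {p : ℕ} (SigTilde Sig Sighat : Matrix (Fin p) (Fin p) ℝ)
    (hSigTilde : SigTilde.PosSemidef) (hSig : Sig.PosSemidef)
    (lam : ℝ) (hlam0 : 0 < lam) (hlam : 2 * opN (SigTilde - Sig) ≤ lam)
    (hhat : Sighat.PosSemidef)
    (hmin : ∀ S : Matrix (Fin p) (Fin p) ℝ, S.PosSemidef →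
      frobSq (SigTilde - Sighat) + lam * nucN Sighat ≤ frobSq (SigTilde - S) + lam * nucN S) :
    ∀ S : Matrix (Fin p) (Fin p) ℝ, S.PosSemidef →
      frobSq (Sighat - Sig) ≤ frobSq (S - Sig) + 2 * lam * nucN S :=
  stmt15_general SigTilde Sig Sighat lam hlam hhat hmin
end
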